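/- arXiv:0710.3887 — 8 statements merged into one kernel-verified Lean document; each statement's English description precedes it below -/
import Mathlib

section
/- Let L be a lattice implication algebra and A an LI-ideal of L. Then A is an ultra LI-ideal of L if and only if A is a proper LI-ideal and for every x ∈ L, x ∈ A or x' ∈ A. -/
/-- A lattice implication algebra: a bounded lattice with an order-reversing
involution `compl` and an implication `imp` satisfying (I1)-(I5), (L1), (L2),
with the order characterized by `x ≤ y ↔ x → y = 1` (here `1 = ⊤`, `0 = ⊥`). -/
class LatticeImplicationAlgebra (L : Type*) extends Lattice L, BoundedOrder L where
  compl : L → L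
  imp : L → L → L
  compl_anti : ∀ x y : L, x ≤ y → compl y ≤ compl x
  compl_compl : ∀ x : L, compl (compl x) = x
  I1 : ∀ x y z : L, imp x (imp y z) = imp y (imp x z)
  I2 : ∀ x : L, imp x x = ⊤
  I3 : ∀ x y : L, imp x y = imp (compl y) (compl x)
  I4 : ∀ x y : L, imp x y = ⊤ → imp y x = ⊤ → x = y
  I5 : ∀ x y : L, imp (imp x y) y = imp (imp y x) x
  L1 : ∀ x y z : L, imp (x ⊔ y) z = imp x z ⊓ imp y z
  L2 : ∀ x y z : L, imp (x ⊓ y) z = imp x z ⊔ imp y z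
  le_iff_imp : ∀ x y : L, x ≤ y ↔ imp x y = ⊤

namespace LatticeImplicationAlgebra

variable {L : Type*} [LatticeImplicationAlgebra L]

/-- `A` is an LI-ideal: `0 ∈ A` and `(x→y)' ∈ A` together with `y ∈ A` imply `x ∈ A`. -/
def IsLIIdeal (A : Set L) : Prop :=
  (⊥ : L) ∈ A ∧ ∀ x y : L, compl (imp x y) ∈ A → y ∈ A → x ∈ A

end LatticeImplicationAlgebra

open LatticeImplicationAlgebra

section Aux
variable {L : Type*} [LatticeImplicationAlgebra L]

lemma lia_imp_top (a : L) : imp (⊤ : L) a = a := by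
  have h1 : imp a (⊤ : L) = ⊤ := (le_iff_imp a ⊤).1 le_top
  have h2 : imp (imp (⊤ : L) a) a = ⊤ := by
    have := I5 a (⊤ : L)
    rw [h1, I2] at this
    exact this.symm
  have h3 : imp a (imp (⊤ : L) a) = ⊤ := by
    rw [I1, I2]
    exact (le_iff_imp (⊤ : L) ⊤).1 le_rfl
  exact I4 _ _ h2 h3

lemma lia_compl_top : compl (⊤ : L) = (⊥ : L) := by
  have : compl (⊤ : L) ≤ compl (compl (⊥ : L)) :=
    compl_anti _ _ le_top
  rw [LatticeImplicationAlgebra.compl_compl] at this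
  exact le_bot_iff.1 this

lemma lia_univ_of_both {A : Set L} (hA : IsLIIdeal A) {x : L}
    (hx : x ∈ A) (hx' : compl x ∈ A) : A = Set.univ := by
  have htop : (⊤ : L) ∈ A := by
    apply hA.2 ⊤ (compl x) _ hx'
    rw [lia_imp_top, LatticeImplicationAlgebra.compl_compl]
    exact hx
  ext y
  simp only [Set.mem_univ, iff_true]
  apply hA.2 y ⊤ _ htop
  rw [(le_iff_imp y ⊤).1 le_top, lia_compl_top]
  exact hA.1

end Aux

/-- An LI-ideal `A` of a lattice implication algebra `L` is an ultra LI-ideal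
iff `A` is proper and for every `x`, `x ∈ A` or `x' ∈ A`. -/
theorem ultra_iff_proper_and_mem_or_compl_mem {L : Type*} [LatticeImplicationAlgebra L]
    (A : Set L) (hA : IsLIIdeal A) :
    (∀ x : L, x ∈ A ↔ compl x ∉ A) ↔
      (A ≠ Set.univ ∧ ∀ x : L, x ∈ A ∨ compl x ∈ A) := by
  constructor
  · intro hu
    constructor
    · intro heq
      have h1 : (⊤ : L) ∈ A := heq ▸ Set.mem_univ _
      have h2 : compl (⊤ : L) ∈ A := heq ▸ Set.mem_univ _
      exact ((hu ⊤).1 h1) h2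
    · intro x
      by_cases h : x ∈ A
      · exact Or.inl h
      · exact Or.inr (not_not.1 (fun hc => h ((hu x).2 hc)))
  · rintro ⟨hproper, hall⟩ x
    constructor
    · intro hx hx'
      exact hproper (lia_univ_of_both hA hx hx')
    · intro hx'
      exact (hall x).resolve_right hx'
end

section
/- Let L be a lattice implication algebra and A an LI-ideal of L. Then A is an ultra LI-ideal of L if and only if A is a maximal LI-ideal of L that is also an ILI-ideal of L. -/
open LatticeImplicationAlgebra

/-- `A` is an ILI-ideal: `0 ∈ A` and `(((x→y)'→y)'→z)' ∈ A` together with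
`z ∈ A` imply `(x→y)' ∈ A`. -/
def IsILIIdeal {L : Type*} [LatticeImplicationAlgebra L] (A : Set L) : Prop :=
  (⊥ : L) ∈ A ∧ ∀ x y z : L,
    compl (imp (compl (imp (compl (imp x y)) y)) z) ∈ A → z ∈ A →
      compl (imp x y) ∈ A

namespace LatticeImplicationAlgebra

variable {L : Type*} [LatticeImplicationAlgebra L]

private lemma cc (x : L) : compl (compl x) = x := compl_compl x

private lemma imp_eq_top' {x y : L} (h : x ≤ y) : imp x y = ⊤ := (le_iff_imp x y).mp h
private lemma le_of_imp' {x y : L} (h : imp x y = ⊤) : x ≤ y := (le_iff_imp x y).mpr h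

private lemma imp_top' (x : L) : imp x ⊤ = ⊤ := imp_eq_top' le_top

private lemma top_imp' (x : L) : imp (⊤ : L) x = x := by
  apply I4
  · rw [I5 ⊤ x, imp_top' x, I2 ⊤]
  · rw [I1 x ⊤ x, I2 x, imp_top' ⊤]

private lemma compl_bot' : compl (⊥ : L) = ⊤ := by
  apply le_antisymm le_top
  calc (⊤ : L) = compl (compl ⊤) := (cc ⊤).symm
    _ ≤ compl ⊥ := compl_anti _ _ bot_le

private lemma compl_top' : compl (⊤ : L) = ⊥ := by rw [← compl_bot', cc]

private lemma imp_bot' (x : L) : imp x ⊥ = compl x := by rw [I3, compl_bot', top_imp']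

private lemma le_imp_self' (x y : L) : y ≤ imp x y :=
  le_of_imp' (by rw [I1, I2, imp_top'])

private lemma imp_le_imp' (x y z : L) : imp x y ≤ imp (imp z x) (imp z y) := by
  apply le_of_imp'
  calc imp (imp x y) (imp (imp z x) (imp z y))
      = imp (imp z x) (imp (imp x y) (imp z y)) := I1 _ _ _
    _ = imp (imp z x) (imp z (imp (imp x y) y)) := by rw [I1 (imp x y) z y]
    _ = imp (imp z x) (imp z (imp (imp y x) x)) := by rw [I5]
    _ = imp (imp z x) (imp (imp y x) (imp z x)) := by rw [I1 z (imp y x) x]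
    _ = imp (imp y x) (imp (imp z x) (imp z x)) := I1 _ _ _
    _ = imp (imp y x) ⊤ := by rw [I2]
    _ = ⊤ := imp_top' _

private lemma imp_le_imp_right' {a b : L} (h : a ≤ b) (c : L) : imp c a ≤ imp c b := by
  have h2 := imp_le_imp' a b c
  rw [imp_eq_top' h] at h2
  exact le_of_imp' (top_le_iff.mp h2)

private lemma mem_of_le_mem {A : Set L} (hA : IsLIIdeal A) {x y : L} (hxy : x ≤ y)
    (hy : y ∈ A) : x ∈ A :=
  hA.2 x y (by rw [imp_eq_top' hxy, compl_top']; exact hA.1) hy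

private lemma eq_univ_of_mem_compl_mem {A : Set L} (hA : IsLIIdeal A) {x : L}
    (hx : x ∈ A) (hx' : compl x ∈ A) : A = Set.univ := by
  ext y
  simp only [Set.mem_univ, iff_true]
  exact hA.2 y x (mem_of_le_mem hA (compl_anti _ _ (le_imp_self' y x)) hx') hx

private lemma compl_imp_le' (z x : L) : compl (imp z x) ≤ z := by
  have h : compl z ≤ imp z x := by
    apply le_of_imp'
    rw [I1 (compl z) z x, I3 (compl z) x, cc, I1 z (compl x) z, I2, imp_top']
  calc compl (imp z x) ≤ compl (compl z) := compl_anti _ _ h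
    _ = z := cc z

private lemma key_ineq (p q x : L) :
    imp (compl (imp p q)) x ≤
      imp (compl (imp (compl (imp p x)) x)) (compl (imp q x)) := by
  have hL : imp (compl (imp p q)) x = imp p (imp (compl q) x) := by
    rw [I3 (compl (imp p q)) x, cc, I1, I3 (compl x) q, cc]
  have hR : imp (compl (imp (compl (imp p x)) x)) (compl (imp q x))
      = imp p (imp (imp x q) (imp (compl q) x)) := by
    rw [I3 (compl (imp (compl (imp p x)) x)) (compl (imp q x)), cc, cc,
      I1 (imp q x) (compl (imp p x)) x, I5 q x,
      I1 (compl (imp p x)) (imp x q) q, I3 (compl (imp p x)) q, cc,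
      I1 (compl q) p x, I1 (imp x q) p (imp (compl q) x)]
  rw [hL, hR]
  exact imp_le_imp_right' (le_imp_self' (imp x q) (imp (compl q) x)) p

private lemma gen_ideal {A : Set L} (hA : IsLIIdeal A) (hI : IsILIIdeal A) (a : L) :
    IsLIIdeal {z : L | compl (imp z a) ∈ A} := by
  constructor
  · show compl (imp ⊥ a) ∈ A
    rw [imp_eq_top' bot_le, compl_top']
    exact hA.1
  · intro p q hp hq
    have hp : compl (imp (compl (imp p q)) a) ∈ A := hp
    have hq : compl (imp q a) ∈ A := hq
    have hw1 : compl (imp (compl (imp (compl (imp p a)) a)) (compl (imp q a))) ∈ A :=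
      mem_of_le_mem hA (compl_anti _ _ (key_ineq p q a)) hp
    have hwA : compl (imp (compl (imp p a)) a) ∈ A := hA.2 _ (compl (imp q a)) hw1 hq
    show compl (imp p a) ∈ A
    refine hI.2 p a ⊥ ?_ hA.1
    rw [imp_bot', cc]
    exact hwA

end LatticeImplicationAlgebra

/-- An LI-ideal `A` of a lattice implication algebra `L` is an ultra LI-ideal
iff `A` is a maximal LI-ideal (proper, and not a proper subset of any proper
LI-ideal) that is also an ILI-ideal of `L`. -/
theorem ultra_iff_maximal_and_ILI {L : Type*} [LatticeImplicationAlgebra L]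
    (A : Set L) (hA : IsLIIdeal A) :
    (∀ x : L, x ∈ A ↔ compl x ∉ A) ↔
      ((A ≠ Set.univ ∧ ∀ B : Set L, IsLIIdeal B → B ≠ Set.univ → ¬ A ⊂ B) ∧
        IsILIIdeal A) := by
  constructor
  · intro hU
    refine ⟨⟨?_, ?_⟩, hA.1, ?_⟩
    · intro hEq
      exact (hU ⊥).mp hA.1 (hEq ▸ Set.mem_univ _)
    · intro B hB hBne hAB
      obtain ⟨b, hbB, hbA⟩ := Set.exists_of_ssubset hAB
      have hb' : compl b ∈ A := by
        by_contra h
        exact hbA ((hU b).mpr h)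
      exact hBne (eq_univ_of_mem_compl_mem hB hbB (hAB.1 hb'))
    · intro x y z h1 h2
      have h3 : compl (imp (compl (imp x y)) y) ∈ A := hA.2 _ z h1 h2
      by_contra hu
      have hu' : imp x y ∈ A := (hU (imp x y)).mpr hu
      have hy : y ∈ A := mem_of_le_mem hA (le_imp_self' x y) hu'
      exact hu (hA.2 (compl (imp x y)) y h3 hy)
  · rintro ⟨⟨hproper, hmax⟩, hILI⟩
    intro x
    constructor
    · intro hx hx'
      exact hproper (eq_univ_of_mem_compl_mem hA hx hx')
    · intro hx'
      by_contra hx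
      have hB := gen_ideal hA hILI x
      have hAB : A ⊂ {z : L | compl (imp z x) ∈ A} := by
        constructor
        · intro z hz
          exact mem_of_le_mem hA (compl_imp_le' z x) hz
        · intro hsub
          refine hx (hsub ?_)
          show compl (imp x x) ∈ A
          rw [LatticeImplicationAlgebra.I2, compl_top']
          exact hA.1
      have hBuniv : {z : L | compl (imp z x) ∈ A} = Set.univ := by
        by_contra h
        exact hmax _ hB h hAB
      have hTop : (⊤ : L) ∈ {z : L | compl (imp z x) ∈ A} := hBuniv ▸ Set.mem_univ _
      rw [Set.mem_setOf_eq, top_imp'] at hTop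
      exact hx' hTop
end

section
/- Every proper LI-ideal of a lattice implication algebra L is contained in some maximal LI-ideal of L. -/
open LatticeImplicationAlgebra
open LatticeImplicationAlgebra

lemma compl_top_eq_bot {L : Type*} [LatticeImplicationAlgebra L] :
    compl (⊤ : L) = (⊥ : L) := by
  have h := compl_anti (compl (⊥ : L)) ⊤ le_top
  rw [LatticeImplicationAlgebra.compl_compl] at h; exact le_bot_iff.1 h

lemma top_mem_iff_univ {L : Type*} [LatticeImplicationAlgebra L] {A : Set L}
    (hA : IsLIIdeal A) : (⊤ : L) ∈ A ↔ A = Set.univ := by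
  constructor
  · intro h
    ext x
    simp only [Set.mem_univ, iff_true]
    refine hA.2 x ⊤ ?_ h
    have : imp x (⊤ : L) = ⊤ := (le_iff_imp x ⊤).1 le_top
    rw [this, compl_top_eq_bot]; exact hA.1
  · intro h; rw [h]; trivial

/-- Every proper LI-ideal of a lattice implication algebra is contained in some
maximal LI-ideal. -/
theorem proper_LIIdeal_le_maximal {L : Type*} [LatticeImplicationAlgebra L]
    (A : Set L) (hA : IsLIIdeal A) (hproper : A ≠ Set.univ) :
    ∃ M : Set L, IsLIIdeal M ∧ M ≠ Set.univ ∧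
      (∀ B : Set L, IsLIIdeal B → B ≠ Set.univ → ¬ M ⊂ B) ∧ A ⊆ M := by
  set S : Set (Set L) := {B | IsLIIdeal B ∧ (⊤ : L) ∉ B} with hS
  have hAS : A ∈ S := ⟨hA, fun h => hproper ((top_mem_iff_univ hA).1 h)⟩
  have hchainub : ∀ c ⊆ S, IsChain (· ⊆ ·) c → c.Nonempty →
      ∃ ub ∈ S, ∀ s ∈ c, s ⊆ ub := by
    intro c hcS hchain hcne
    obtain ⟨B0, hB0⟩ := hcne
    refine ⟨⋃₀ c, ⟨⟨Set.mem_sUnion.2 ⟨B0, hB0, (hcS hB0).1.1⟩, ?_⟩, ?_⟩,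
      fun s hs => Set.subset_sUnion_of_mem hs⟩
    · rintro x y ⟨B1, hB1, hx⟩ ⟨B2, hB2, hy⟩
      rcases hchain.total hB1 hB2 with h | h
      · exact ⟨B2, hB2, (hcS hB2).1.2 x y (h hx) hy⟩
      · exact ⟨B1, hB1, (hcS hB1).1.2 x y hx (h hy)⟩
    · rintro ⟨B, hB, htop⟩
      exact (hcS hB).2 htop
  obtain ⟨M, hAM, hMmax⟩ := zorn_subset_nonempty S hchainub A hAS
  refine ⟨M, hMmax.1.1, fun h => hMmax.1.2 (h ▸ trivial), ?_, hAM⟩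
  intro B hB hBp hMB
  have hBS : B ∈ S := ⟨hB, fun h => hBp ((top_mem_iff_univ hB).1 h)⟩
  exact hMB.2 (hMmax.2 hBS hMB.1)
end

section
/- Let A be an LI-ideal of an MTL-algebra L. Then A is closed under joins: for all x, y ∈ L, if x ∈ A and y ∈ A, then x∨y ∈ A. -/
/-- An MTL-algebra: a residuated lattice (bounded lattice, commutative monoid
structure `tmul` with unit `⊤`, and residuum `himp` adjoint to `tmul`)
satisfying the pre-linearity equation `(x→y) ∨ (y→x) = 1`. -/
class MTLAlgebra (L : Type*) extends Lattice L, BoundedOrder L where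
  tmul : L → L → L
  himp : L → L → L
  tmul_comm : ∀ x y : L, tmul x y = tmul y x
  tmul_assoc : ∀ x y z : L, tmul (tmul x y) z = tmul x (tmul y z)
  top_tmul : ∀ x : L, tmul ⊤ x = x
  adjoint : ∀ x y z : L, z ≤ himp x y ↔ tmul z x ≤ y
  prelinearity : ∀ x y : L, himp x y ⊔ himp y x = ⊤

namespace MTLAlgebra

variable {L : Type*} [MTLAlgebra L]

/-- The negation `x' := x → 0`. -/
def neg (x : L) : L := himp x ⊥

/-- `A` is an LI-ideal of an MTL-algebra: `0 ∈ A` and `(x'→y')' ∈ A`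
together with `x ∈ A` imply `y ∈ A`. -/
def IsLIIdeal (A : Set L) : Prop :=
  (⊥ : L) ∈ A ∧ ∀ x y : L, neg (himp (neg x) (neg y)) ∈ A → x ∈ A → y ∈ A

end MTLAlgebra

open MTLAlgebra

section Aux

variable {L : Type*} [MTLAlgebra L]

lemma my_tmul_mono_right {a b : L} (c : L) (h : a ≤ b) :
    tmul c a ≤ tmul c b := by
  rw [tmul_comm]
  have hb : b ≤ himp c (tmul c b) :=
    (adjoint c (tmul c b) b).mpr (le_of_eq (tmul_comm b c))
  exact (adjoint c (tmul c b) a).mp (h.trans hb)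

lemma my_himp_eq_top {a b : L} (h : a ≤ b) : himp a b = ⊤ :=
  le_antisymm le_top ((adjoint a b ⊤).mpr (by rw [top_tmul]; exact h))

lemma my_himp_self (a : L) : himp a a = (⊤ : L) := my_himp_eq_top le_rfl

lemma my_neg_top : neg (⊤ : L) = ⊥ := by
  have h : tmul (himp (⊤:L) ⊥) ⊤ ≤ ⊥ := (adjoint ⊤ ⊥ _).mp le_rfl
  rw [tmul_comm, top_tmul] at h
  exact le_antisymm h bot_le

lemma my_le_neg_neg (a : L) : a ≤ neg (neg a) := by
  refine (adjoint _ _ _).mpr ?_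
  rw [tmul_comm]
  exact (adjoint a ⊥ (himp a ⊥)).mp le_rfl

lemma my_le_himp_self (a b : L) : a ≤ himp b a := by
  refine (adjoint _ _ _).mpr ?_
  calc tmul a b ≤ tmul a ⊤ := my_tmul_mono_right a le_top
    _ = a := by rw [tmul_comm, top_tmul]

lemma my_himp_anti {a b : L} (c : L) (h : a ≤ b) : himp b c ≤ himp a c := by
  refine (adjoint _ _ _).mpr ?_
  calc tmul (himp b c) a ≤ tmul (himp b c) b := my_tmul_mono_right _ h
    _ ≤ c := (adjoint b c _).mp le_rfl

lemma my_himp_inf (a b c : L) : himp a (b ⊓ c) = himp a b ⊓ himp a c := by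
  apply le_antisymm
  · exact le_inf
      ((adjoint _ _ _).mpr (le_trans ((adjoint _ _ _).mp le_rfl) inf_le_left))
      ((adjoint _ _ _).mpr (le_trans ((adjoint _ _ _).mp le_rfl) inf_le_right))
  · refine (adjoint _ _ _).mpr (le_inf ?_ ?_)
    · rw [tmul_comm]
      exact le_trans (my_tmul_mono_right a inf_le_left)
        (by rw [tmul_comm]; exact (adjoint a b _).mp le_rfl)
    · rw [tmul_comm]
      exact le_trans (my_tmul_mono_right a inf_le_right)
        (by rw [tmul_comm]; exact (adjoint a c _).mp le_rfl)

lemma my_himp_sup (a b c : L) : himp (a ⊔ b) c = himp a c ⊓ himp b c := by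
  apply le_antisymm
  · exact le_inf (my_himp_anti c le_sup_left) (my_himp_anti c le_sup_right)
  · refine (adjoint _ _ _).mpr ?_
    rw [tmul_comm]
    refine (adjoint _ _ _).mp (sup_le ?_ ?_)
    · refine (adjoint _ _ _).mpr ?_
      calc tmul a (himp a c ⊓ himp b c)
          ≤ tmul a (himp a c) := my_tmul_mono_right a inf_le_left
        _ = tmul (himp a c) a := tmul_comm _ _
        _ ≤ c := (adjoint a c _).mp le_rfl
    · refine (adjoint _ _ _).mpr ?_
      calc tmul b (himp a c ⊓ himp b c)
          ≤ tmul b (himp b c) := my_tmul_mono_right b inf_le_right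
        _ = tmul (himp b c) b := tmul_comm _ _
        _ ≤ c := (adjoint b c _).mp le_rfl

lemma my_neg_sup (a b : L) : neg (a ⊔ b) = neg a ⊓ neg b := my_himp_sup a b ⊥

end Aux

/-- Every LI-ideal of an MTL-algebra is closed under joins. -/
theorem LIIdeal_sup_mem {L : Type*} [MTLAlgebra L] (A : Set L)
    (hA : IsLIIdeal A) :
    ∀ x y : L, x ∈ A → y ∈ A → x ⊔ y ∈ A := by
  intro x y hx hy
  -- Step 1: z := (y' → x')' ∈ A
  set z : L := neg (himp (neg y) (neg x)) with hz
  have hzA : z ∈ A := by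
    apply hA.2 x z ?_ hx
    have h1 : neg x ≤ neg z := by
      have : neg x ≤ himp (neg y) (neg x) := my_le_himp_self _ _
      exact le_trans this (my_le_neg_neg _)
    have h2 : himp (neg x) (neg z) = ⊤ := my_himp_eq_top h1
    rw [h2, my_neg_top]
    exact hA.1
  -- Step 2: apply ideal property with y
  apply hA.2 y (x ⊔ y) ?_ hy
  have key : himp (neg y) (neg (x ⊔ y)) = himp (neg y) (neg x) := by
    rw [my_neg_sup, my_himp_inf, my_himp_self, inf_top_eq]
  rw [key]
  exact hzA
end

section
/- Every ILI-ideal A of an MTL-algebra L satisfies x∧x' ∈ A for every x ∈ L, i.e., every ILI-ideal is a Boolean LI-ideal. -/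
open MTLAlgebra

/-- Every ILI-ideal of an MTL-algebra is a Boolean LI-ideal:
it contains `x ⊓ x'` for every `x`. -/
theorem ILI_is_Boolean {L : Type*} [MTLAlgebra L] (A : Set L)
    (hA : IsLIIdeal A)
    (hILI : ∀ x y : L, neg (himp x (neg (himp y x))) ∈ A → x ∈ A) :
    ∀ x : L, x ⊓ neg x ∈ A := by
  intro x
  set a := x ⊓ neg x with ha
  have htopimp : ∀ b : L, himp (⊤ : L) b = b := by
    intro b
    apply le_antisymm
    · have := (adjoint (⊤ : L) b (himp ⊤ b)).mp le_rfl
      rwa [tmul_comm, top_tmul] at this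
    · rw [adjoint, tmul_comm, top_tmul]
  have haa : tmul a a ≤ (⊥ : L) := by
    have h1 : a ≤ himp x ⊥ := inf_le_right
    have h2 : tmul a x ≤ (⊥ : L) := (adjoint x ⊥ a).mp h1
    have hx : x ≤ himp a (tmul a x) :=
      (adjoint a (tmul a x) x).mpr (by rw [tmul_comm])
    have h3 : tmul a a ≤ tmul a x :=
      (adjoint a (tmul a x) a).mp (le_trans inf_le_left hx)
    exact le_trans h3 h2
  have hneg : a ≤ neg a := (adjoint a ⊥ a).mpr haa
  have hi : himp a (neg a) = (⊤ : L) := by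
    apply le_antisymm le_top
    rw [adjoint, top_tmul]
    exact hneg
  have hkey : neg (himp a (neg (himp (⊤ : L) a))) = (⊥ : L) := by
    rw [htopimp, hi]
    exact htopimp ⊥
  apply hILI a ⊤
  rw [hkey]
  exact hA.1
end

section
/- If A is a Boolean LI-ideal of an MTL-algebra L, then for every x ∈ L, (x→x')' ∈ A implies x ∈ A. -/
open MTLAlgebra

namespace MTLAux

variable {L : Type*} [MTLAlgebra L]

lemma himp_tmul (x y : L) : tmul (himp x y) x ≤ y :=
  (adjoint x y (himp x y)).mp le_rfl

lemma tmul_mono_left {a b : L} (c : L) (h : a ≤ b) : tmul a c ≤ tmul b c :=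
  (adjoint c (tmul b c) a).mp (le_trans h ((adjoint c (tmul b c) b).mpr le_rfl))

lemma tmul_mono_right {a b : L} (c : L) (h : a ≤ b) : tmul c a ≤ tmul c b := by
  rw [tmul_comm c a, tmul_comm c b]; exact tmul_mono_left c h

lemma tmul_le_right (x y : L) : tmul x y ≤ y := by
  calc tmul x y ≤ tmul ⊤ y := tmul_mono_left y le_top
    _ = y := top_tmul y

lemma tmul_le_left (x y : L) : tmul x y ≤ x := by
  rw [tmul_comm]; exact tmul_le_right y x

lemma himp_anti {a b : L} (c : L) (h : a ≤ b) : himp b c ≤ himp a c := by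
  refine (adjoint a c (himp b c)).mpr ?_
  calc tmul (himp b c) a ≤ tmul (himp b c) b := tmul_mono_right _ h
    _ ≤ c := himp_tmul b c

lemma neg_anti {a b : L} (h : a ≤ b) : neg b ≤ neg a := himp_anti ⊥ h

lemma himp_eq_top {a b : L} (h : a ≤ b) : himp a b = ⊤ := by
  refine le_antisymm le_top ((adjoint a b ⊤).mpr ?_)
  rw [top_tmul]; exact h

lemma neg_top : (neg (⊤ : L)) = ⊥ := by
  refine le_antisymm ?_ bot_le
  have := himp_tmul (⊤ : L) ⊥
  rwa [tmul_comm, top_tmul] at this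

lemma mem_of_le {A : Set L} (hA : IsLIIdeal A) {a b : L} (h : b ≤ a) (ha : a ∈ A) :
    b ∈ A := by
  refine hA.2 a b ?_ ha
  rw [himp_eq_top (neg_anti h), neg_top]
  exact hA.1

lemma tmul_sup_le {a b c : L} : tmul (a ⊔ b) c ≤ tmul a c ⊔ tmul b c := by
  refine (adjoint c (tmul a c ⊔ tmul b c) (a ⊔ b)).mp (sup_le ?_ ?_)
  · exact (adjoint c _ a).mpr le_sup_left
  · exact (adjoint c _ b).mpr le_sup_right

/-- `(x→x') ⊗ x'' ≤ x'`. -/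
lemma key1 (x : L) : tmul (himp x (neg x)) (neg (neg x)) ≤ neg x := by
  refine (adjoint x ⊥ _).mpr ?_
  calc tmul (tmul (himp x (neg x)) (neg (neg x))) x
      = tmul (neg (neg x)) (tmul (himp x (neg x)) x) := by
        rw [tmul_comm (himp x (neg x)) (neg (neg x)), tmul_assoc]
    _ ≤ tmul (neg (neg x)) (neg x) := tmul_mono_right _ (himp_tmul x (neg x))
    _ ≤ ⊥ := himp_tmul (neg x) ⊥

/-- `(x→y) ⊗ (x⊓y)' ≤ x'`. -/
lemma key2 (x y : L) : tmul (himp x y) (neg (x ⊓ y)) ≤ neg x := by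
  refine (adjoint x ⊥ _).mpr ?_
  calc tmul (tmul (himp x y) (neg (x ⊓ y))) x
      = tmul (neg (x ⊓ y)) (tmul (himp x y) x) := by
        rw [tmul_comm (himp x y) (neg (x ⊓ y)), tmul_assoc]
    _ ≤ tmul (neg (x ⊓ y)) (x ⊓ y) :=
        tmul_mono_right _ (le_inf (tmul_le_right _ _) (himp_tmul x y))
    _ ≤ ⊥ := himp_tmul (x ⊓ y) ⊥

/-- De Morgan: `(x⊓y)' ≤ x' ⊔ y'`. -/
lemma deMorgan (x y : L) : neg (x ⊓ y) ≤ neg x ⊔ neg y := by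
  have h : neg (x ⊓ y) = tmul (himp x y ⊔ himp y x) (neg (x ⊓ y)) := by
    rw [prelinearity, top_tmul]
  rw [h]
  refine le_trans tmul_sup_le (sup_le ?_ ?_)
  · exact le_trans (key2 x y) le_sup_left
  · rw [inf_comm] at *
    exact le_trans (key2 y x) le_sup_right

end MTLAux

open MTLAux

/-- If `A` is a Boolean LI-ideal of an MTL-algebra `L`, then
`(x→x')' ∈ A` implies `x ∈ A`. -/
theorem Boolean_LIIdeal_imp_self_neg {L : Type*} [MTLAlgebra L] (A : Set L)
    (hA : IsLIIdeal A) (hBool : ∀ x : L, x ⊓ neg x ∈ A) :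
    ∀ x : L, neg (himp x (neg x)) ∈ A → x ∈ A := by
  intro x hx
  have hkey : tmul (himp x (neg x)) (neg (x ⊓ neg x)) ≤ neg x := by
    calc tmul (himp x (neg x)) (neg (x ⊓ neg x))
        ≤ tmul (himp x (neg x)) (neg x ⊔ neg (neg x)) :=
          tmul_mono_right _ (deMorgan x (neg x))
      _ = tmul (neg x ⊔ neg (neg x)) (himp x (neg x)) := tmul_comm _ _
      _ ≤ tmul (neg x) (himp x (neg x)) ⊔ tmul (neg (neg x)) (himp x (neg x)) :=
          tmul_sup_le
      _ ≤ neg x := by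
          refine sup_le (tmul_le_left _ _) ?_
          rw [tmul_comm]; exact key1 x
  have hle : himp x (neg x) ≤ himp (neg (x ⊓ neg x)) (neg x) :=
    (adjoint _ _ _).mpr hkey
  have hN : neg (himp (neg (x ⊓ neg x)) (neg x)) ∈ A :=
    mem_of_le hA (neg_anti hle) hx
  exact hA.2 (x ⊓ neg x) x hN (hBool x)
end

section
/- A proper LI-ideal A of an MTL-algebra L is prime if and only if for all x, y ∈ L, (x→y)' ∈ A or (y→x)' ∈ A. -/
open MTLAlgebra

namespace MTLAlgebra

variable {L : Type*} [MTLAlgebra L]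

lemma tmul_le_tmul_left' {a b : L} (h : a ≤ b) (c : L) : tmul c a ≤ tmul c b := by
  have hb : b ≤ himp c (tmul c b) := (adjoint _ _ _).mpr (by rw [tmul_comm])
  have := (adjoint _ _ _).mp (le_trans h hb)
  rwa [tmul_comm] at this

lemma tmul_neg_self_le_bot' (a : L) : tmul a (neg a) ≤ ⊥ := by
  rw [tmul_comm]
  exact (adjoint _ _ _).mp (le_refl (neg a))

lemma neg_antitone' {a b : L} (h : a ≤ b) : neg b ≤ neg a := by
  refine (adjoint _ _ _).mpr ?_
  calc tmul (neg b) a ≤ tmul (neg b) b := tmul_le_tmul_left' h _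
    _ ≤ ⊥ := by rw [tmul_comm]; exact tmul_neg_self_le_bot' b

lemma himp_eq_top' {a b : L} (h : a ≤ b) : himp a b = ⊤ :=
  le_antisymm le_top ((adjoint _ _ _).mpr (by rw [top_tmul]; exact h))

lemma neg_top' : (neg (⊤ : L)) = ⊥ := by
  apply le_antisymm _ bot_le
  have := tmul_neg_self_le_bot' (⊤ : L)
  rwa [top_tmul] at this

lemma mem_of_le' {A : Set L} (hA : IsLIIdeal A) {x y : L} (h : y ≤ x) (hx : x ∈ A) :
    y ∈ A := by
  apply hA.2 x y _ hx
  rw [himp_eq_top' (neg_antitone' h), neg_top']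
  exact hA.1

lemma inf_neg_le_neg_sup' (a b : L) : neg a ⊓ neg b ≤ neg (a ⊔ b) := by
  refine (adjoint _ _ _).mpr ?_
  rw [tmul_comm]
  refine (adjoint _ _ _).mp ?_
  refine sup_le ?_ ?_
  · refine (adjoint _ _ _).mpr ?_
    calc tmul a (neg a ⊓ neg b) ≤ tmul a (neg a) := tmul_le_tmul_left' inf_le_left _
      _ ≤ ⊥ := tmul_neg_self_le_bot' a
  · refine (adjoint _ _ _).mpr ?_
    calc tmul b (neg a ⊓ neg b) ≤ tmul b (neg b) := tmul_le_tmul_left' inf_le_right _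
      _ ≤ ⊥ := tmul_neg_self_le_bot' b

lemma tmul_himp_le_inf' (x y : L) : tmul (himp x y) x ≤ x ⊓ y := by
  refine le_inf ?_ ((adjoint _ _ _).mp le_rfl)
  calc tmul (himp x y) x = tmul x (himp x y) := tmul_comm _ _
    _ ≤ tmul x ⊤ := tmul_le_tmul_left' le_top _
    _ = x := by rw [tmul_comm, top_tmul]

lemma himp_le_himp_neg' (x y : L) : himp x y ≤ himp (neg (x ⊓ y)) (neg x) := by
  refine (adjoint _ _ _).mpr ?_
  show tmul (himp x y) (neg (x ⊓ y)) ≤ himp x ⊥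
  refine (adjoint _ _ _).mpr ?_
  calc tmul (tmul (himp x y) (neg (x ⊓ y))) x
      = tmul (tmul (himp x y) x) (neg (x ⊓ y)) := by
        rw [tmul_assoc, tmul_assoc, tmul_comm (neg (x ⊓ y))]
    _ ≤ tmul (x ⊓ y) (neg (x ⊓ y)) := by
        rw [tmul_comm, tmul_comm (x ⊓ y)]
        exact tmul_le_tmul_left' (tmul_himp_le_inf' x y) _
    _ ≤ ⊥ := tmul_neg_self_le_bot' _

lemma mem_of_inf_mem' {A : Set L} (hA : IsLIIdeal A) {x y : L}
    (hxy : x ⊓ y ∈ A) (h : neg (himp x y) ∈ A) : x ∈ A := by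
  apply hA.2 (x ⊓ y) x _ hxy
  exact mem_of_le' hA (neg_antitone' (himp_le_himp_neg' x y)) h

end MTLAlgebra

/-- A proper LI-ideal `A` of an MTL-algebra `L` is prime iff for all `x, y`,
`(x→y)' ∈ A` or `(y→x)' ∈ A`. -/
theorem prime_iff_neg_himp_mem {L : Type*} [MTLAlgebra L] (A : Set L)
    (hA : IsLIIdeal A) (hproper : A ≠ Set.univ) :
    (∀ x y : L, x ⊓ y ∈ A → x ∈ A ∨ y ∈ A) ↔
      (∀ x y : L, neg (himp x y) ∈ A ∨ neg (himp y x) ∈ A) := by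
  constructor
  · intro hprime x y
    apply hprime
    have h1 : neg (himp x y) ⊓ neg (himp y x) ≤ (⊥ : L) := by
      have := inf_neg_le_neg_sup' (himp x y) (himp y x)
      rwa [prelinearity, neg_top'] at this
    exact mem_of_le' hA h1 hA.1
  · intro h x y hxy
    rcases h x y with h1 | h1
    · exact Or.inl (mem_of_inf_mem' hA hxy h1)
    · exact Or.inr (mem_of_inf_mem' hA (by rwa [inf_comm] at hxy) h1)
end

section
/- Let A be a proper LI-ideal of an MTL-algebra L. Then A is both a prime LI-ideal and a Boolean LI-ideal of L if and only if for every x ∈ L, x ∈ A or x' ∈ A. -/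
open MTLAlgebra

section Aux

variable {L : Type*} [MTLAlgebra L]

lemma mtl_mp (x y : L) : tmul (himp x y) x ≤ y := (adjoint x y _).1 le_rfl

lemma tmul_mono_left {a b : L} (c : L) (h : a ≤ b) : tmul a c ≤ tmul b c :=
  (adjoint c (tmul b c) a).1 (h.trans ((adjoint c (tmul b c) b).2 le_rfl))

lemma tmul_mono_right (a : L) {b c : L} (h : b ≤ c) : tmul a b ≤ tmul a c := by
  rw [tmul_comm a b, tmul_comm a c]; exact tmul_mono_left a h

lemma himp_eq_top {x y : L} (h : x ≤ y) : himp x y = ⊤ :=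
  le_antisymm le_top ((adjoint x y ⊤).2 (by rw [top_tmul]; exact h))

lemma himp_mono_right (u : L) {w v : L} (h : w ≤ v) : himp u w ≤ himp u v :=
  (adjoint u v _).2 ((mtl_mp u w).trans h)

lemma neg_top_eq : (neg (⊤ : L)) = ⊥ := by
  refine le_antisymm ?_ bot_le
  have := mtl_mp (⊤ : L) (⊥ : L)
  rwa [tmul_comm, top_tmul] at this

lemma neg_antitone {x y : L} (h : x ≤ y) : neg y ≤ neg x :=
  (adjoint x ⊥ (neg y)).2 ((tmul_mono_right (neg y) h).trans (mtl_mp y ⊥))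

lemma le_neg_neg (x : L) : x ≤ neg (neg x) :=
  (adjoint (neg x) ⊥ x).2 (by rw [tmul_comm]; exact mtl_mp x ⊥)

lemma tmul_le_bot (x : L) : tmul x (neg x) ≤ ⊥ := by
  rw [tmul_comm]; exact mtl_mp x ⊥

lemma ideal_downward {A : Set L} (hA : IsLIIdeal A) {x y : L}
    (hx : x ∈ A) (h : y ≤ x) : y ∈ A := by
  refine hA.2 x y ?_ hx
  rw [himp_eq_top (neg_antitone h), neg_top_eq]
  exact hA.1

lemma dneg_mem {A : Set L} (hA : IsLIIdeal A) {x : L} (hx : x ∈ A) :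
    neg (neg x) ∈ A := by
  refine hA.2 x (neg (neg x)) ?_ hx
  rw [himp_eq_top (le_neg_neg (neg x)), neg_top_eq]
  exact hA.1

lemma full_of_mem_neg_mem {A : Set L} (hA : IsLIIdeal A) {a : L}
    (ha : a ∈ A) (ha' : neg a ∈ A) : ∀ z : L, z ∈ A := by
  intro z
  refine hA.2 a z ?_ ha
  have h1 : neg (neg a) ≤ himp (neg a) (neg z) :=
    (adjoint (neg a) (neg z) _).2 ((mtl_mp (neg a) ⊥).trans bot_le)
  have h2 : neg (himp (neg a) (neg z)) ≤ neg a :=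
    (neg_antitone h1).trans (neg_antitone (le_neg_neg a))
  exact ideal_downward hA ha' h2

lemma tmul_sup_le (a b c : L) : tmul a (b ⊔ c) ≤ tmul a b ⊔ tmul a c := by
  rw [tmul_comm]
  refine (adjoint a _ _).1 (sup_le ?_ ?_) <;>
    refine (adjoint a _ _).2 ?_ <;> rw [tmul_comm]
  · exact le_sup_left
  · exact le_sup_right

lemma himp_tmul_le_inf (x y : L) : tmul (himp x y) x ≤ x ⊓ y :=
  le_inf (by simpa [top_tmul] using tmul_mono_left x (le_top : himp x y ≤ ⊤))
    (mtl_mp x y)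

lemma demorgan_le (x y z : L) : himp (x ⊓ y) z ≤ himp x z ⊔ himp y z := by
  have key : ∀ u v : L, tmul (himp (u ⊓ v) z) (himp u v) ≤ himp u z := by
    intro u v
    refine (adjoint u z _).2 ?_
    rw [tmul_assoc]
    calc tmul (himp (u ⊓ v) z) (tmul (himp u v) u)
        ≤ tmul (himp (u ⊓ v) z) (u ⊓ v) := tmul_mono_right _ (himp_tmul_le_inf u v)
      _ ≤ z := mtl_mp _ z
  have h1 : tmul (himp (x ⊓ y) z) (himp x y) ≤ himp x z := key x y
  have h2 : tmul (himp (x ⊓ y) z) (himp y x) ≤ himp y z := by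
    have := key y x
    rwa [inf_comm y x] at this
  calc himp (x ⊓ y) z = tmul (himp (x ⊓ y) z) (himp x y ⊔ himp y x) := by
        rw [prelinearity, tmul_comm, top_tmul]
    _ ≤ tmul (himp (x ⊓ y) z) (himp x y) ⊔ tmul (himp (x ⊓ y) z) (himp y x) :=
        tmul_sup_le _ _ _
    _ ≤ himp x z ⊔ himp y z := sup_le (h1.trans le_sup_left) (h2.trans le_sup_right)

lemma mtl_sum_mem {A : Set L} (hA : IsLIIdeal A) {a b : L} (ha : a ∈ A) (hb : b ∈ A) :
    neg (tmul (neg a) (neg b)) ∈ A := by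
  refine hA.2 a _ ?_ ha
  have h1 : neg b ≤ himp (neg a) (neg (neg (tmul (neg a) (neg b)))) := by
    refine (adjoint _ _ _).2 ?_
    calc tmul (neg b) (neg a) = tmul (neg a) (neg b) := tmul_comm _ _
      _ ≤ neg (neg (tmul (neg a) (neg b))) := le_neg_neg _
  exact ideal_downward hA (dneg_mem hA hb) (neg_antitone h1)

lemma mtl_sup_mem {A : Set L} (hA : IsLIIdeal A) {a b : L} (ha : a ∈ A) (hb : b ∈ A) :
    a ⊔ b ∈ A := by
  refine ideal_downward hA (mtl_sum_mem hA ha hb) (sup_le ?_ ?_)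
  · refine (adjoint _ _ _).2 ?_
    rw [tmul_comm (neg a) (neg b), ← tmul_assoc]
    calc tmul (tmul a (neg b)) (neg a)
        ≤ tmul (tmul a (neg a)) (neg b) := by
          rw [tmul_assoc, tmul_assoc]
          exact tmul_mono_right a (le_of_eq (tmul_comm _ _))
      _ ≤ tmul ⊥ (neg b) := tmul_mono_left _ (tmul_le_bot a)
      _ ≤ ⊥ := (adjoint (neg b) ⊥ ⊥).1 bot_le
  · refine (adjoint _ _ _).2 ?_
    rw [← tmul_assoc]
    calc tmul (tmul b (neg a)) (neg b)
        ≤ tmul (tmul b (neg b)) (neg a) := by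
          rw [tmul_assoc, tmul_assoc]
          exact tmul_mono_right b (le_of_eq (tmul_comm _ _))
      _ ≤ tmul ⊥ (neg a) := tmul_mono_left _ (tmul_le_bot b)
      _ ≤ ⊥ := (adjoint (neg a) ⊥ ⊥).1 bot_le

end Aux

/-- A proper LI-ideal `A` of an MTL-algebra `L` is both prime and Boolean iff
for every `x`, `x ∈ A` or `x' ∈ A`. -/
theorem prime_and_Boolean_iff {L : Type*} [MTLAlgebra L] (A : Set L)
    (hA : IsLIIdeal A) (hproper : A ≠ Set.univ) :
    ((∀ x y : L, x ⊓ y ∈ A → x ∈ A ∨ y ∈ A) ∧ (∀ x : L, x ⊓ neg x ∈ A)) ↔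
      (∀ x : L, x ∈ A ∨ neg x ∈ A) := by
  constructor
  · rintro ⟨hprime, hbool⟩ x
    exact hprime x (neg x) (hbool x)
  · intro h
    constructor
    · intro x y hxy
      rcases h x with hx | hx'
      · exact Or.inl hx
      rcases h y with hy | hy'
      · exact Or.inr hy
      exfalso
      have hsup : neg x ⊔ neg y ∈ A := mtl_sup_mem hA hx' hy'
      have hdm : neg (x ⊓ y) ≤ neg x ⊔ neg y := demorgan_le x y ⊥
      have hneg : neg (x ⊓ y) ∈ A := ideal_downward hA hsup hdm
      exact hproper (Set.eq_univ_of_forall (full_of_mem_neg_mem hA hxy hneg))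
    · intro x
      rcases h x with hx | hx'
      · exact ideal_downward hA hx inf_le_left
      · exact ideal_downward hA hx' inf_le_right
end
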